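/- Let P, Q, R, S be a pqrs-quad. Then the first integral 𝔇(w) = e^{2(1−ℓ)w}·(P(w)·S(w) − Q(w)·R(w)) does not depend on w: for every w ∈ ℂ, e^{2(1−ℓ)w}·(P(w)·S(w) − Q(w)·R(w)) = P(0)·S(0) − Q(0)·R(0). -/
import Mathlib


theorem statement_4 (ell lam mu : ℂ) (P Q R S : ℂ → ℂ)
    (hP : Differentiable ℂ P) (hQ : Differentiable ℂ Q)
    (hR : Differentiable ℂ R) (hS : Differentiable ℂ S)
    (hsys1 : ∀ w : ℂ, Complex.exp w * deriv P w =
      (mu + (ell - 1) * Complex.exp w) * P w - Q w + Complex.exp (2 * w) * R w)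
    (hsys2 : ∀ w : ℂ, deriv Q w =
      Complex.exp w * ((lam - (ell + 1) * mu * Complex.exp w) * P w + mu * Q w + S w))
    (hsys3 : ∀ w : ℂ, Complex.exp w * deriv R w =
      -(lam + mu ^ 2) * P w + Complex.exp w * (2 * (ell - 1) - mu * Complex.exp w) * R w - S w)
    (hsys4 : ∀ w : ℂ, Complex.exp w * deriv S w =
      -(lam + mu ^ 2) * Q w + Complex.exp (2 * w) * (lam - (ell + 1) * mu * Complex.exp w) * R w
        + ((ell - 1) * Complex.exp w - mu) * S w) :
    ∀ w : ℂ,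
      Complex.exp (2 * (1 - ell) * w) * (P w * S w - Q w * R w) =
        P 0 * S 0 - Q 0 * R 0 := by
  set F : ℂ → ℂ := fun w => Complex.exp (2 * (1 - ell) * w) * (P w * S w - Q w * R w) with hF
  have hFdiff : Differentiable ℂ F := by
    exact (Complex.differentiable_exp.comp (differentiable_id.const_mul _)).mul
      ((hP.mul hS).sub (hQ.mul hR))
  have hderiv : ∀ w : ℂ, deriv F w = 0 := by
    intro w
    have hE : HasDerivAt (fun w : ℂ => Complex.exp (2 * (1 - ell) * w))
        (Complex.exp (2 * (1 - ell) * w) * (2 * (1 - ell))) w := by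
      simpa using ((hasDerivAt_id w).const_mul (2 * (1 - ell))).cexp
    have hmain : HasDerivAt F
        (Complex.exp (2 * (1 - ell) * w) * (2 * (1 - ell)) * (P w * S w - Q w * R w)
          + Complex.exp (2 * (1 - ell) * w) *
            ((deriv P w * S w + P w * deriv S w) - (deriv Q w * R w + Q w * deriv R w))) w :=
      hE.mul (((hP w).hasDerivAt.mul (hS w).hasDerivAt).sub
        ((hQ w).hasDerivAt.mul (hR w).hasDerivAt))
    rw [hmain.deriv]
    have hne : Complex.exp w ≠ 0 := Complex.exp_ne_zero w
    have h1 := hsys1 w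
    have h2 := hsys2 w
    have h3 := hsys3 w
    have h4 := hsys4 w
    have e2 : Complex.exp (2 * w) = Complex.exp w * Complex.exp w := by
      rw [two_mul, Complex.exp_add]
    rw [e2] at h1; rw [e2] at h4
    have key : Complex.exp w *
        (Complex.exp (2 * (1 - ell) * w) * (2 * (1 - ell)) * (P w * S w - Q w * R w)
          + Complex.exp (2 * (1 - ell) * w) *
            ((deriv P w * S w + P w * deriv S w) - (deriv Q w * R w + Q w * deriv R w))) = 0 := by
      rw [h2]
      linear_combination Complex.exp (2 * (1 - ell) * w) * S w * h1
        + Complex.exp (2 * (1 - ell) * w) * P w * h4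
        - Complex.exp (2 * (1 - ell) * w) * Q w * h3
    exact (mul_eq_zero.mp key).resolve_left hne
  have := is_const_of_deriv_eq_zero hFdiff hderiv
  intro w
  have h0 : F 0 = P 0 * S 0 - Q 0 * R 0 := by simp [hF]
  rw [← h0]
  exact this w 0
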